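/- arXiv:2303.06883 — 2 statements merged into one kernel-verified Lean document; each statement's English description precedes it below -/
import Mathlib

section
/- Let R be a commutative ring, ι a finite index set, and a : ι → R a family of elements such that aᵢ² = 0 for every i ∈ ι. Then for every natural number n, (∑_{i ∈ ι} aᵢ)ⁿ = n! · ∑_{S ⊆ ι, |S| = n} ∏_{i ∈ S} aᵢ, where the outer sum on the right runs over all subsets S of ι of cardinality n. -/
/-!
Multiplying `∏ i ∈ S, a i` by `∑ i, a i` kills the terms with `i ∈ S` (as `a i ^ 2 = 0`) and
turns the others into products over `insert i S`. Each `T` of cardinality `n + 1` arises in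
this way from exactly `n + 1` pairs `(S, i)`, namely `(T.erase i, i)` for `i ∈ T`, so
`n! • e_n * e_1 = (n + 1)! • e_{n+1}` for the sums `e_k` of products over `k`-subsets.
-/

open Finset Nat

namespace Finset

variable {ι : Type*}

theorem sum_powersetCard_sum_sdiff_insert [DecidableEq ι] {M : Type*} [AddCommMonoid M]
    (s : Finset ι) (n : ℕ) (f : Finset ι → M) :
    ∑ S ∈ powersetCard n s, ∑ i ∈ s \ S, f (insert i S) =
      (n + 1) • ∑ T ∈ powersetCard (n + 1) s, f T := by
  have hcount : (n + 1) • ∑ T ∈ powersetCard (n + 1) s, f T =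
      ∑ T ∈ powersetCard (n + 1) s, ∑ _i ∈ T, f T := by
    rw [smul_sum]
    refine sum_congr rfl fun T hT => ?_
    rw [sum_const, (mem_powersetCard.1 hT).2]
  rw [hcount, sum_sigma', sum_sigma']
  refine sum_nbij' (fun p => ⟨insert p.2 p.1, p.2⟩) (fun p => ⟨p.1.erase p.2, p.2⟩)
    ?_ ?_ ?_ ?_ fun _ _ => rfl
  · rintro ⟨S, i⟩ hp
    obtain ⟨⟨hSs, hS⟩, his, hiS⟩ := by
      simpa only [mem_sigma, mem_powersetCard, mem_sdiff] using hp
    simp only [mem_sigma, mem_powersetCard]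
    exact ⟨⟨insert_subset his hSs, by rw [card_insert_of_notMem hiS, hS]⟩,
      mem_insert_self i S⟩
  · rintro ⟨T, i⟩ hp
    obtain ⟨⟨hTs, hT⟩, hiT⟩ := by simpa only [mem_sigma, mem_powersetCard] using hp
    simp only [mem_sigma, mem_powersetCard, mem_sdiff]
    exact ⟨⟨(erase_subset i T).trans hTs, by rw [card_erase_of_mem hiT, hT]; rfl⟩,
      hTs hiT, notMem_erase i T⟩
  · rintro ⟨S, i⟩ hp
    simp only [mem_sigma, mem_sdiff] at hp
    simp [erase_insert hp.2.2]
  · rintro ⟨T, i⟩ hp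
    simp only [mem_sigma] at hp
    simp [insert_erase hp.2]

theorem prod_mul_eq_zero_of_mem_of_sq_eq_zero {R : Type*} [CommMonoidWithZero R]
    [DecidableEq ι] {a : ι → R} {S : Finset ι} {i : ι} (hi : i ∈ S) (hai : a i ^ 2 = 0) :
    (∏ j ∈ S, a j) * a i = 0 := by
  rw [← mul_prod_erase S a hi, mul_right_comm, ← sq, hai, zero_mul]

theorem prod_mul_sum_eq_sum_sdiff_prod_insert {R : Type*} [CommSemiring R] [DecidableEq ι]
    {a : ι → R} (s S : Finset ι) (ha : ∀ i ∈ S, a i ^ 2 = 0) :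
    (∏ j ∈ S, a j) * ∑ i ∈ s, a i = ∑ i ∈ s \ S, ∏ j ∈ insert i S, a j := by
  rw [mul_sum, ← sum_subset sdiff_subset fun i _ hi => ?_]
  · exact sum_congr rfl fun i hi => by rw [prod_insert (mem_sdiff.1 hi).2, mul_comm]
  · have hiS : i ∈ S := by_contra fun h => hi (mem_sdiff.2 ⟨‹_›, h⟩)
    exact prod_mul_eq_zero_of_mem_of_sq_eq_zero hiS (ha i hiS)

theorem sum_pow_of_sq_eq_zero {R : Type*} [CommSemiring R] (s : Finset ι) {a : ι → R}
    (ha : ∀ i ∈ s, a i ^ 2 = 0) (n : ℕ) :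
    (∑ i ∈ s, a i) ^ n = n ! • ∑ S ∈ powersetCard n s, ∏ i ∈ S, a i := by
  classical
  induction n with
  | zero => simp
  | succ n ih =>
    calc (∑ i ∈ s, a i) ^ (n + 1)
        = n ! • ∑ S ∈ powersetCard n s, (∏ i ∈ S, a i) * ∑ i ∈ s, a i := by
          rw [pow_succ, ih, smul_mul_assoc, sum_mul]
      _ = n ! • ∑ S ∈ powersetCard n s, ∑ i ∈ s \ S, ∏ j ∈ insert i S, a j := by
          congr 1
          exact sum_congr rfl fun S hS => prod_mul_sum_eq_sum_sdiff_prod_insert s S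
            fun i hi => ha i ((mem_powersetCard.1 hS).1 hi)
      _ = (n + 1)! • ∑ S ∈ powersetCard (n + 1) s, ∏ i ∈ S, a i := by
          rw [sum_powersetCard_sum_sdiff_insert s n fun T => ∏ j ∈ T, a j, smul_smul,
            factorial_succ, mul_comm]

end Finset

/-- If `a i ^ 2 = 0` for every `i` in a finite index set, then
`(∑ i, a i) ^ n = n! • ∑_{S ⊆ ι, |S| = n} ∏_{i ∈ S} a i`. -/
theorem sum_pow_eq_factorial_smul_sum_powersetCard
    {R : Type*} [CommRing R] {ι : Type*} [Fintype ι]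
    (a : ι → R) (ha : ∀ i, a i ^ 2 = 0) (n : ℕ) :
    (∑ i, a i) ^ n =
      Nat.factorial n • ∑ S ∈ Finset.powersetCard n (Finset.univ : Finset ι),
        ∏ i ∈ S, a i :=
  Finset.sum_pow_of_sq_eq_zero Finset.univ (fun i _ => ha i) n
end

section
/- Let R be a commutative ring, r and j natural numbers, x₁, …, x_r ∈ R and h ∈ R. Then ∑_{S ⊆ {1,…,r}, |S| = j} ∏_{i ∈ S} (xᵢ + h) = ∑_{l = 0}^{j} C(r − l, j − l) · h^{j−l} · ∑_{T ⊆ {1,…,r}, |T| = l} ∏_{i ∈ T} xᵢ, where C(·,·) denotes the binomial coefficient. In other words, the j-th elementary symmetric polynomial of the shifted family (x₁ + h, …, x_r + h) equals ∑_{l=0}^{j} C(r−l, j−l) e_l(x₁,…,x_r) h^{j−l}. -/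
/-!
Expanding `∏_{i ∈ S} (xᵢ + h)` gives `∑_{T ⊆ S} h^{j - |T|} ∏_{i ∈ T} xᵢ` for `|S| = j`.
Summing over all `j`-subsets `S`, each `l`-subset `T` is counted once for every `j`-subset
containing it, i.e. `C(r - l, j - l)` times.
-/

namespace Finset

variable {ι : Type*}

theorem prod_add_const_eq_sum_powersetCard {R : Type*} [CommSemiring R] (s : Finset ι)
    (x : ι → R) (h : R) :
    ∏ i ∈ s, (x i + h) =
      ∑ l ∈ range (#s + 1), h ^ (#s - l) * ∑ T ∈ s.powersetCard l, ∏ i ∈ T, x i := by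
  classical
  rw [prod_add, sum_powerset]
  refine sum_congr rfl fun l _ => ?_
  rw [mul_sum]
  refine sum_congr rfl fun T hT => ?_
  rw [mem_powersetCard] at hT
  rw [prod_const, card_sdiff_of_subset hT.1, hT.2, mul_comm]

theorem sum_powersetCard_sum_powersetCard {M : Type*} [AddCommMonoid M] [DecidableEq ι]
    (s : Finset ι) (f : Finset ι → M) {l j : ℕ} (hlj : l ≤ j) :
    ∑ S ∈ s.powersetCard j, ∑ T ∈ S.powersetCard l, f T =
      (#s - l).choose (j - l) • ∑ T ∈ s.powersetCard l, f T := by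
  rw [sum_comm' (t' := s.powersetCard l) (s' := fun T => {S ∈ s.powersetCard j | T ⊆ S})]
  · rw [smul_sum]
    refine sum_congr rfl fun T hT => ?_
    rw [mem_powersetCard] at hT
    rw [sum_const, card_filter_powersetCard_subset T s j hT.1 (hT.2 ▸ hlj), hT.2]
  · intro S T
    simp only [mem_powersetCard, mem_filter]
    constructor
    · rintro ⟨⟨hSs, hS⟩, hTS, hT⟩
      exact ⟨⟨⟨hSs, hS⟩, hTS⟩, hTS.trans hSs, hT⟩
    · rintro ⟨⟨⟨hSs, hS⟩, hTS⟩, -, hT⟩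
      exact ⟨⟨hSs, hS⟩, hTS, hT⟩

theorem sum_powersetCard_prod_add_const {R : Type*} [CommSemiring R]
    (s : Finset ι) (j : ℕ) (x : ι → R) (h : R) :
    ∑ S ∈ s.powersetCard j, ∏ i ∈ S, (x i + h) =
      ∑ l ∈ range (j + 1),
        ((#s - l).choose (j - l) : R) * h ^ (j - l) * ∑ T ∈ s.powersetCard l, ∏ i ∈ T, x i := by
  classical
  calc ∑ S ∈ s.powersetCard j, ∏ i ∈ S, (x i + h)
      = ∑ S ∈ s.powersetCard j, ∑ l ∈ range (j + 1),
          h ^ (j - l) * ∑ T ∈ S.powersetCard l, ∏ i ∈ T, x i := by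
        refine sum_congr rfl fun S hS => ?_
        rw [prod_add_const_eq_sum_powersetCard, (mem_powersetCard.mp hS).2]
    _ = ∑ l ∈ range (j + 1), h ^ (j - l) *
          ∑ S ∈ s.powersetCard j, ∑ T ∈ S.powersetCard l, ∏ i ∈ T, x i := by
        rw [sum_comm]
        simp only [mul_sum]
    _ = _ := by
        refine sum_congr rfl fun l hl => ?_
        rw [sum_powersetCard_sum_powersetCard s _ (Nat.lt_succ_iff.mp (mem_range.mp hl)),
          nsmul_eq_mul]
        ring

end Finset

/-- The `j`-th elementary symmetric polynomial of the shifted family `(x₁ + h, …, x_r + h)`: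
`∑_{|S|=j} ∏_{i∈S} (xᵢ + h) = ∑_{l=0}^{j} C(r−l, j−l) h^{j−l} ∑_{|T|=l} ∏_{i∈T} xᵢ`. -/
theorem esymm_shift_eq_sum_choose
    {R : Type*} [CommRing R] (r j : ℕ) (x : Fin r → R) (h : R) :
    ∑ S ∈ Finset.powersetCard j (Finset.univ : Finset (Fin r)), ∏ i ∈ S, (x i + h) =
      ∑ l ∈ Finset.range (j + 1),
        (Nat.choose (r - l) (j - l) : R) * h ^ (j - l) *
          ∑ T ∈ Finset.powersetCard l (Finset.univ : Finset (Fin r)), ∏ i ∈ T, x i := by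
  simpa only [Finset.card_univ, Fintype.card_fin] using
    Finset.sum_powersetCard_prod_add_const Finset.univ j x h
end
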